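/- Conversely, if two holomorphic functions f and g on a connected domain have nonvanishing derivatives and equal Schwarzian derivatives S(f) = S(g), then g is a fractional linear transformation of f: g = (af+b)/(cf+d) for some a,b,c,d with ad-bc ≠ 0. -/

import Mathlib

open Complex

/-- The Schwarzian derivative `S(f) = (f''/f')' - (1/2)(f''/f')²`. -/
noncomputable def schwarzian (f : ℂ → ℂ) (z : ℂ) : ℂ :=
  deriv (fun w => deriv (deriv f) w / deriv f w) z
    - (1 / 2) * (deriv (deriv f) z / deriv f z) ^ 2

/-
The pre-Schwarzian `p = f''/f'` turns `S f = S g` into the Riccati relation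
`p' - p²/2 = q' - q²/2`. Near a point `z₀`, replace `f` by a fractional linear transform `h` of `f`
with the same value, derivative and pre-Schwarzian at `z₀` as `g`; this does not change the
Schwarzian. Then `p_h - p_g`, `h' - g'` and `h - g` in turn solve linear equations `u' = w u` with
`u z₀ = 0`, so they vanish near `z₀`. Hence `a f + b = g (c f + d)` near `z₀`, and by the
identity theorem on all of `U`.
-/

open Filter Topology

section LinearODE

variable {𝕜 : Type*} [NontriviallyNormedField 𝕜] [CharZero 𝕜]

/-- Since `u z₀ = 0`, the order of vanishing of `u` at `z₀` is one more than that of `u'`, while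
`u' = w • u` makes it at most that of `u'`; so it is infinite. -/
theorem AnalyticAt.eventuallyEq_zero_of_deriv_eventuallyEq_smul {E : Type*}
    [NormedAddCommGroup E] [NormedSpace 𝕜 E] [CompleteSpace E] {u : 𝕜 → E} {w : 𝕜 → 𝕜}
    {z₀ : 𝕜} (hu : AnalyticAt 𝕜 u z₀) (hw : AnalyticAt 𝕜 w z₀)
    (hode : deriv u =ᶠ[𝓝 z₀] w • u) (h₀ : u z₀ = 0) : u =ᶠ[𝓝 z₀] 0 := by
  suffices ∀ n : ℕ, (n : ℕ∞) ≤ analyticOrderAt u z₀ from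
    analyticOrderAt_eq_top.mp (ENat.eq_top_iff_forall_ge.mpr this)
  intro n
  induction n with
  | zero => simp
  | succ n ih =>
    rw [Nat.cast_add_one, ← analyticOrderAt_deriv_ge_iff hu h₀, analyticOrderAt_congr hode,
      analyticOrderAt_smul hw hu]
    exact ih.trans le_add_self

theorem AnalyticAt.eventuallyEq_of_riccati [CompleteSpace 𝕜] {p q : 𝕜 → 𝕜} {z₀ : 𝕜}
    (hp : AnalyticAt 𝕜 p z₀) (hq : AnalyticAt 𝕜 q z₀)
    (h : ∀ᶠ z in 𝓝 z₀, deriv p z - 1 / 2 * p z ^ 2 = deriv q z - 1 / 2 * q z ^ 2)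
    (h₀ : p z₀ = q z₀) : p =ᶠ[𝓝 z₀] q := by
  have hode : deriv (p - q) =ᶠ[𝓝 z₀] (fun z => (p z + q z) / 2) • (p - q) := by
    filter_upwards [h, hp.eventually_analyticAt, hq.eventually_analyticAt] with z hz hpz hqz
    rw [deriv_sub hpz.differentiableAt hqz.differentiableAt]
    show _ = (p z + q z) / 2 * (p z - q z)
    linear_combination hz
  have := (hp.sub hq).eventuallyEq_zero_of_deriv_eventuallyEq_smul
    (hp.fun_add hq).div_const hode (sub_eq_zero.mpr h₀)
  exact this.mono fun z hz => sub_eq_zero.mp hz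

end LinearODE

theorem HasDerivAt.linearFractional {𝕜 : Type*} [NontriviallyNormedField 𝕜] {f : 𝕜 → 𝕜}
    {f' z : 𝕜} (a b c d : 𝕜) (hf : HasDerivAt f f' z) (hD : c * f z + d ≠ 0) :
    HasDerivAt (fun w => (a * f w + b) / (c * f w + d))
      ((a * d - b * c) * f' / (c * f z + d) ^ 2) z := by
  convert ((hf.const_mul a).add_const b).fun_div ((hf.const_mul c).add_const d) hD using 1
  congr 1
  ring

noncomputable def preSchwarzian (f : ℂ → ℂ) (z : ℂ) : ℂ :=
  deriv (deriv f) z / deriv f z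

theorem schwarzian_eq_preSchwarzian (f : ℂ → ℂ) (z : ℂ) :
    schwarzian f z = deriv (preSchwarzian f) z - 1 / 2 * preSchwarzian f z ^ 2 :=
  rfl

theorem analyticAt_preSchwarzian {f : ℂ → ℂ} {z : ℂ} (hf : AnalyticAt ℂ f z)
    (hf' : deriv f z ≠ 0) : AnalyticAt ℂ (preSchwarzian f) z :=
  hf.deriv.deriv.div hf.deriv hf'

theorem AnalyticAt.eventuallyEq_of_preSchwarzian_eventuallyEq {h g : ℂ → ℂ} {z₀ : ℂ}
    (hh : AnalyticAt ℂ h z₀) (hg : AnalyticAt ℂ g z₀) (hg' : deriv g z₀ ≠ 0)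
    (hpre : preSchwarzian h =ᶠ[𝓝 z₀] preSchwarzian g)
    (h₀ : h z₀ = g z₀) (h₁ : deriv h z₀ = deriv g z₀) : h =ᶠ[𝓝 z₀] g := by
  have hode : deriv (deriv h - deriv g) =ᶠ[𝓝 z₀] preSchwarzian g • (deriv h - deriv g) := by
    filter_upwards [hpre, hh.eventually_analyticAt, hg.eventually_analyticAt,
      hh.deriv.continuousAt.eventually_ne (h₁ ▸ hg'), hg.deriv.continuousAt.eventually_ne hg']
      with z hz hhz hgz hh'z hg'z
    rw [deriv_sub hhz.deriv.differentiableAt hgz.deriv.differentiableAt]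
    have hh'' : deriv (deriv h) z = preSchwarzian g z * deriv h z := by
      rw [← hz, preSchwarzian, div_mul_cancel₀ _ hh'z]
    have hg'' : deriv (deriv g) z = preSchwarzian g z * deriv g z :=
      (div_mul_cancel₀ _ hg'z).symm
    rw [hh'', hg'', Pi.smul_apply', Pi.sub_apply, smul_eq_mul]
    ring
  have hderiv : deriv h - deriv g =ᶠ[𝓝 z₀] 0 :=
    (hh.deriv.sub hg.deriv).eventuallyEq_zero_of_deriv_eventuallyEq_smul
      (analyticAt_preSchwarzian hg hg') hode (sub_eq_zero.mpr h₁)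
  have hconst : deriv (h - g) =ᶠ[𝓝 z₀] (0 : ℂ → ℂ) • (h - g) := by
    filter_upwards [hderiv, hh.eventually_analyticAt, hg.eventually_analyticAt]
      with z hz hhz hgz
    rw [deriv_sub hhz.differentiableAt hgz.differentiableAt, zero_smul]
    exact hz
  have := (hh.sub hg).eventuallyEq_zero_of_deriv_eventuallyEq_smul analyticAt_const hconst
    (sub_eq_zero.mpr h₀)
  exact this.mono fun z hz => sub_eq_zero.mp hz

theorem AnalyticAt.eventuallyEq_of_schwarzian_eventuallyEq {h g : ℂ → ℂ} {z₀ : ℂ}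
    (hh : AnalyticAt ℂ h z₀) (hg : AnalyticAt ℂ g z₀) (hg' : deriv g z₀ ≠ 0)
    (hS : schwarzian h =ᶠ[𝓝 z₀] schwarzian g) (h₀ : h z₀ = g z₀)
    (h₁ : deriv h z₀ = deriv g z₀) (h₂ : preSchwarzian h z₀ = preSchwarzian g z₀) :
    h =ᶠ[𝓝 z₀] g :=
  hh.eventuallyEq_of_preSchwarzian_eventuallyEq hg hg'
    ((analyticAt_preSchwarzian hh (h₁ ▸ hg')).eventuallyEq_of_riccati
      (analyticAt_preSchwarzian hg hg') hS h₂) h₀ h₁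

section LinearFractional

variable {f : ℂ → ℂ} {a b c d z : ℂ}

theorem preSchwarzian_linearFractional (hf : AnalyticAt ℂ f z) (hD : c * f z + d ≠ 0)
    (hdet : a * d - b * c ≠ 0) :
    preSchwarzian (fun w => (a * f w + b) / (c * f w + d)) z
      = preSchwarzian f z - 2 * c * deriv f z / (c * f z + d) := by
  have hDc : ContinuousAt (fun w => c * f w + d) z := by
    have := hf.continuousAt
    fun_prop
  have hderiv : deriv (fun w => (a * f w + b) / (c * f w + d))
      =ᶠ[𝓝 z] fun w => (a * d - b * c) * deriv f w / (c * f w + d) ^ 2 := by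
    filter_upwards [hf.eventually_analyticAt, hDc.eventually_ne hD] with w hw hDw
    exact (hw.differentiableAt.hasDerivAt.linearFractional a b c d hDw).deriv
  have h2 := (hf.deriv.differentiableAt.hasDerivAt.const_mul (a * d - b * c)).fun_div
    (((hf.differentiableAt.hasDerivAt.const_mul c).add_const d).fun_pow 2) (pow_ne_zero 2 hD)
  unfold preSchwarzian
  rw [hderiv.deriv_eq, h2.deriv, hderiv.self_of_nhds]
  field_simp
  ring

theorem schwarzian_linearFractional (hf : AnalyticAt ℂ f z) (hf' : deriv f z ≠ 0)
    (hD : c * f z + d ≠ 0) (hdet : a * d - b * c ≠ 0) :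
    schwarzian (fun w => (a * f w + b) / (c * f w + d)) z = schwarzian f z := by
  have hDc : ContinuousAt (fun w => c * f w + d) z := by
    have := hf.continuousAt
    fun_prop
  have hpre : preSchwarzian (fun w => (a * f w + b) / (c * f w + d))
      =ᶠ[𝓝 z] preSchwarzian f - fun w => 2 * c * deriv f w / (c * f w + d) := by
    filter_upwards [hf.eventually_analyticAt, hDc.eventually_ne hD] with w hw hDw
    exact preSchwarzian_linearFractional hw hDw hdet
  have hφ := (hf.deriv.differentiableAt.hasDerivAt.const_mul (2 * c)).fun_div
    ((hf.differentiableAt.hasDerivAt.const_mul c).add_const d) hD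
  rw [schwarzian_eq_preSchwarzian, schwarzian_eq_preSchwarzian, hpre.deriv_eq,
    deriv_sub (analyticAt_preSchwarzian hf hf').differentiableAt hφ.differentiableAt, hφ.deriv,
    hpre.self_of_nhds, Pi.sub_apply]
  unfold preSchwarzian
  field_simp
  ring

end LinearFractional

theorem exists_linearFractional_eventuallyEq_of_schwarzian {f g : ℂ → ℂ} {z₀ : ℂ}
    (hf : AnalyticAt ℂ f z₀) (hg : AnalyticAt ℂ g z₀) (hf' : deriv f z₀ ≠ 0)
    (hg' : deriv g z₀ ≠ 0) (hS : schwarzian f =ᶠ[𝓝 z₀] schwarzian g) :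
    ∃ a b c d : ℂ, a * d - b * c ≠ 0 ∧ ∀ᶠ z in 𝓝 z₀, a * f z + b = g z * (c * f z + d) := by
  -- Chosen so that the denominator is `1` at `z₀` and the transform of `f` has the same value,
  -- derivative and pre-Schwarzian there as `g`.
  set c := (preSchwarzian f z₀ - preSchwarzian g z₀) / (2 * deriv f z₀)
  set d := 1 - c * f z₀
  set a := deriv g z₀ / deriv f z₀ + c * g z₀
  set b := g z₀ - a * f z₀
  have hD₀ : c * f z₀ + d = 1 := by ring
  have hdet : a * d - b * c = deriv g z₀ / deriv f z₀ := by ring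
  have hdet₀ : a * d - b * c ≠ 0 := hdet ▸ div_ne_zero hg' hf'
  have hD : ∀ᶠ z in 𝓝 z₀, c * f z + d ≠ 0 := by
    have := hf.continuousAt
    have hDc : ContinuousAt (fun w => c * f w + d) z₀ := by fun_prop
    exact hDc.eventually_ne (hD₀ ▸ one_ne_zero)
  have hlocal : (fun z => (a * f z + b) / (c * f z + d)) =ᶠ[𝓝 z₀] g := by
    refine AnalyticAt.eventuallyEq_of_schwarzian_eventuallyEq ?_ hg hg' ?_ ?_ ?_ ?_
    · exact ((analyticAt_const.mul hf).add analyticAt_const).div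
        ((analyticAt_const.mul hf).add analyticAt_const) hD.self_of_nhds
    · filter_upwards [hf.eventually_analyticAt, hf.deriv.continuousAt.eventually_ne hf', hD, hS]
        with z hfz hf'z hDz hSz
      rw [schwarzian_linearFractional hfz hf'z hDz hdet₀, hSz]
    · simp only [hD₀, b]
      ring
    · rw [(hf.differentiableAt.hasDerivAt.linearFractional a b c d hD.self_of_nhds).deriv, hD₀,
        hdet]
      field_simp
    · rw [preSchwarzian_linearFractional hf hD.self_of_nhds hdet₀, hD₀]
      simp only [c]
      field_simp
      ring
  refine ⟨a, b, c, d, hdet₀, ?_⟩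
  filter_upwards [hlocal, hD] with z hz hDz
  rw [← hz, div_mul_cancel₀ _ hDz]

theorem linearFractional_of_add_eq_mul {K : Type*} [Field K] {a b c d x y : K}
    (h : a * x + b = y * (c * x + d)) (hdet : a * d - b * c ≠ 0) :
    c * x + d ≠ 0 ∧ y = (a * x + b) / (c * x + d) := by
  have hD : c * x + d ≠ 0 := by
    intro hD
    apply hdet
    linear_combination (a - c * y) * hD - c * h
  exact ⟨hD, by rw [h, mul_div_cancel_right₀ _ hD]⟩

/-- Two holomorphic functions with nonvanishing derivatives on a connected domain
that have equal Schwarzian derivatives differ by a fractional linear transformation. -/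
theorem eq_schwarzian_implies_fractional_linear
    (U : Set ℂ) (hU : IsOpen U) (hUconn : IsConnected U)
    (f g : ℂ → ℂ) (hf : DifferentiableOn ℂ f U) (hg : DifferentiableOn ℂ g U)
    (hf' : ∀ z ∈ U, deriv f z ≠ 0) (hg' : ∀ z ∈ U, deriv g z ≠ 0)
    (hS : ∀ z ∈ U, schwarzian f z = schwarzian g z) :
    ∃ a b c d : ℂ, a * d - b * c ≠ 0 ∧
      ∀ z ∈ U, c * f z + d ≠ 0 ∧ g z = (a * f z + b) / (c * f z + d) := by
  obtain ⟨z₀, hz₀⟩ := hUconn.nonempty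
  have hfa := hf.analyticOnNhd hU
  have hga := hg.analyticOnNhd hU
  obtain ⟨a, b, c, d, hdet, hlocal⟩ := exists_linearFractional_eventuallyEq_of_schwarzian
    (hfa z₀ hz₀) (hga z₀ hz₀) (hf' z₀ hz₀) (hg' z₀ hz₀)
    (eventually_of_mem (hU.mem_nhds hz₀) hS)
  have hglobal : Set.EqOn (fun z => a * f z + b) (fun z => g z * (c * f z + d)) U :=
    ((analyticOnNhd_const.mul hfa).add analyticOnNhd_const).eqOn_of_preconnected_of_eventuallyEq
      (hga.mul ((analyticOnNhd_const.mul hfa).add analyticOnNhd_const)) hUconn.isPreconnected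
      hz₀ hlocal
  exact ⟨a, b, c, d, hdet, fun z hz => linearFractional_of_add_eq_mul (hglobal hz) hdet⟩
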